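/- arXiv:2004.08660 — 2 statements merged into one kernel-verified Lean document; each statement's English description precedes it below -/
import Mathlib

section
/- Let X ~ Γ_λ(α,β) with λ ∈ (0,1), α > 0, β > 0 and α + 2 < 1/λ. Then the expectation E[X] = α / (β(1 - λ(α+1))). -/
/-!
Substituting `t = β x` gives `E[X] = Γ_λ(α+1) / (β Γ_λ(α))`, so the theorem reduces to the
recurrence `(1 - λ(s+1)) Γ_λ(s+1) = s Γ_λ(s)`. This is the fundamental theorem of calculus
on `(0, ∞)` for `g(t) = (1+λt)^(1-1/λ) t^s`, which vanishes at `0` and at `∞` when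
`s + 1 < 1/λ`, and whose derivative is
`s (1+λt)^(-1/λ) t^(s-1) + (λ(s+1) - 1) (1+λt)^(-1/λ) t^s`.
-/

open MeasureTheory Set Filter Topology

/-- The degenerate gamma function `Γ_λ(s) = ∫_0^∞ (1+λt)^{-1/λ} t^{s-1} dt`. -/
noncomputable def degGamma (lam s : ℝ) : ℝ :=
  ∫ t in Set.Ioi (0:ℝ), (1 + lam * t) ^ (-1/lam) * t ^ (s - 1)

/-- The probability density function of the degenerate gamma distribution `Γ_λ(α,β)`. -/
noncomputable def degGammaPdf (lam α β x : ℝ) : ℝ :=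
  if 0 < x then (1 / degGamma lam α) * β * (1 + lam * β * x) ^ (-1/lam) * (β * x) ^ (α - 1)
  else 0

lemma one_add_mul_rpow_le_of_nonpos {lam t c : ℝ} (hlam : 0 < lam) (ht : 0 < t) (hc : c ≤ 0) :
    (1 + lam * t) ^ c ≤ lam ^ c * t ^ c := by
  rw [← Real.mul_rpow hlam.le ht.le]
  exact Real.rpow_le_rpow_of_nonpos (by positivity) (by linarith) hc

lemma integrableOn_one_add_mul_rpow_mul_rpow {lam c s : ℝ} (hlam : 0 < lam) (hs : 0 < s)
    (hsc : s + c < 0) :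
    IntegrableOn (fun t : ℝ => (1 + lam * t) ^ c * t ^ (s - 1)) (Ioi 0) := by
  have hc : c ≤ 0 := by linarith
  have hmeas : AEStronglyMeasurable (fun t : ℝ => (1 + lam * t) ^ c * t ^ (s - 1))
      (volume.restrict (Ioi 0)) := by
    refine ContinuousOn.aestronglyMeasurable (fun t (ht : 0 < t) => ?_) measurableSet_Ioi
    have : 0 < 1 + lam * t := by positivity
    exact ((continuousAt_const.add (continuousAt_const.mul continuousAt_id)).rpow_const
      (Or.inl this.ne')).mul (continuousAt_id.rpow_const (Or.inl ht.ne')) |>.continuousWithinAt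
  rw [← Ioc_union_Ioi_eq_Ioi zero_le_one]
  refine IntegrableOn.union ?_ ?_
  · have hint : IntegrableOn (fun t : ℝ => t ^ (s - 1)) (Ioc 0 1) := by
      rw [← intervalIntegrable_iff_integrableOn_Ioc_of_le zero_le_one]
      exact intervalIntegral.intervalIntegrable_rpow' (by linarith)
    refine hint.integrable.mono
      (hmeas.mono_measure (Measure.restrict_mono Ioc_subset_Ioi_self le_rfl))
      ((ae_restrict_iff' measurableSet_Ioc).mpr (ae_of_all _ fun t ⟨ht, _⟩ => ?_))
    rw [Real.norm_of_nonneg (by positivity), Real.norm_of_nonneg (by positivity)]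
    exact mul_le_of_le_one_left (by positivity)
      (Real.rpow_le_one_of_one_le_of_nonpos (by nlinarith) hc)
  · -- near `∞` the integrand is `O(t ^ (s + c - 1))`
    have hint : IntegrableOn (fun t : ℝ => lam ^ c * t ^ (s - 1 + c)) (Ioi 1) :=
      (integrableOn_Ioi_rpow_of_lt (by linarith) one_pos).const_mul _
    refine hint.integrable.mono (hmeas.mono_measure
      (Measure.restrict_mono (Ioi_subset_Ioi zero_le_one) le_rfl))
      ((ae_restrict_iff' measurableSet_Ioi).mpr (ae_of_all _ fun t (ht : 1 < t) => ?_))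
    have ht0 : 0 < t := by linarith
    rw [Real.norm_of_nonneg (by positivity), Real.norm_of_nonneg (by positivity),
      Real.rpow_add ht0]
    calc (1 + lam * t) ^ c * t ^ (s - 1) ≤ lam ^ c * t ^ c * t ^ (s - 1) :=
          mul_le_mul_of_nonneg_right (one_add_mul_rpow_le_of_nonpos hlam ht0 hc) (by positivity)
      _ = lam ^ c * (t ^ (s - 1) * t ^ c) := by ring

lemma tendsto_one_add_mul_rpow_mul_rpow_atTop {lam c s : ℝ} (hlam : 0 < lam) (hs : 0 ≤ s)
    (hsc : s + c < 0) :
    Tendsto (fun t : ℝ => (1 + lam * t) ^ c * t ^ s) atTop (𝓝 0) := by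
  have hlim : Tendsto (fun t : ℝ => lam ^ c * t ^ (s + c)) atTop (𝓝 0) := by
    simpa using (tendsto_rpow_neg_atTop (neg_pos.mpr hsc)).const_mul (lam ^ c)
  refine squeeze_zero' ?_ ?_ hlim
  · filter_upwards [eventually_gt_atTop 0] with t ht
    have : 0 < 1 + lam * t := by positivity
    positivity
  · filter_upwards [eventually_gt_atTop 0] with t ht
    rw [Real.rpow_add ht]
    calc (1 + lam * t) ^ c * t ^ s ≤ lam ^ c * t ^ c * t ^ s :=
          mul_le_mul_of_nonneg_right (one_add_mul_rpow_le_of_nonpos hlam ht (by linarith))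
            (by positivity)
      _ = lam ^ c * (t ^ s * t ^ c) := by ring

lemma integrableOn_degGamma_integrand {lam s : ℝ} (hlam : 0 < lam) (hs : 0 < s)
    (h : s < 1 / lam) :
    IntegrableOn (fun t : ℝ => (1 + lam * t) ^ (-1/lam) * t ^ (s - 1)) (Ioi 0) :=
  integrableOn_one_add_mul_rpow_mul_rpow hlam hs (by rw [neg_div]; linarith)

lemma degGamma_pos {lam s : ℝ} (hlam : 0 < lam) (hs : 0 < s) (h : s < 1 / lam) :
    0 < degGamma lam s := by
  have hpos : ∀ t ∈ Ioi (0:ℝ), 0 < (1 + lam * t) ^ (-1/lam) * t ^ (s - 1) :=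
    fun t (ht : 0 < t) => by
      have : 0 < 1 + lam * t := by positivity
      positivity
  rw [degGamma, setIntegral_pos_iff_support_of_nonneg_ae
    ((ae_restrict_iff' measurableSet_Ioi).mpr (ae_of_all _ fun t ht => (hpos t ht).le))
    (integrableOn_degGamma_integrand hlam hs h),
    inter_eq_right.mpr fun t ht => Function.mem_support.mpr (hpos t ht).ne', Real.volume_Ioi]
  exact ENNReal.zero_lt_top

lemma hasDerivAt_one_add_mul_rpow_mul_rpow {lam s t : ℝ} (hlam : 0 < lam) (ht : 0 < t) :
    HasDerivAt (fun u : ℝ => (1 + lam * u) ^ (1 - 1/lam) * u ^ s)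
      (s * ((1 + lam * t) ^ (-1/lam) * t ^ (s - 1))
        + (lam * (s + 1) - 1) * ((1 + lam * t) ^ (-1/lam) * t ^ (s + 1 - 1))) t := by
  have h1 : 0 < 1 + lam * t := by positivity
  have hbase : HasDerivAt (fun u : ℝ => 1 + lam * u) lam t := by
    simpa using ((hasDerivAt_id t).const_mul lam).const_add 1
  refine ((hbase.rpow_const (p := 1 - 1/lam) (Or.inl h1.ne')).mul
    (Real.hasDerivAt_rpow_const (p := s) (Or.inl ht.ne'))).congr_deriv ?_
  rw [show (1:ℝ) - 1/lam - 1 = -1/lam by ring, show (1:ℝ) - 1/lam = 1 + -1/lam by ring,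
    Real.rpow_add h1, Real.rpow_one, add_sub_cancel_right, Real.rpow_sub_one ht.ne']
  field_simp
  ring

lemma degGamma_add_one {lam s : ℝ} (hlam : 0 < lam) (hs : 0 < s) (h : s + 1 < 1 / lam) :
    (1 - lam * (s + 1)) * degGamma lam (s + 1) = s * degGamma lam s := by
  have hcont : ContinuousWithinAt (fun u : ℝ => (1 + lam * u) ^ (1 - 1/lam) * u ^ s) (Ici 0) 0 :=
    ((((continuous_const.add (continuous_const.mul continuous_id)).continuousAt).rpow_const
      (Or.inl (by norm_num))).mul
      (Real.continuousAt_rpow_const 0 s (Or.inr hs.le))).continuousWithinAt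
  have hint_s := (integrableOn_degGamma_integrand hlam hs (by linarith)).const_mul s
  have hint_s_add_one :=
    (integrableOn_degGamma_integrand hlam (s := s + 1) (by linarith) h).const_mul
      (lam * (s + 1) - 1)
  have hparts := integral_Ioi_of_hasDerivAt_of_tendsto hcont
    (fun t ht => hasDerivAt_one_add_mul_rpow_mul_rpow hlam ht) (hint_s.add hint_s_add_one)
    (tendsto_one_add_mul_rpow_mul_rpow_atTop hlam hs.le (by linarith))
  rw [integral_add hint_s hint_s_add_one, integral_const_mul, integral_const_mul,
    Real.zero_rpow hs.ne', mul_zero, sub_zero] at hparts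
  change s * degGamma lam s + (lam * (s + 1) - 1) * degGamma lam (s + 1) = 0 at hparts
  linarith

lemma integral_mul_degGammaPdf (lam α : ℝ) {β : ℝ} (hβ : 0 < β) :
    ∫ x : ℝ, x * degGammaPdf lam α β x = degGamma lam (α + 1) / (β * degGamma lam α) := by
  have hind : (fun x => x * degGammaPdf lam α β x) = (Ioi 0).indicator fun x =>
      (degGamma lam α)⁻¹ * ((1 + lam * (β * x)) ^ (-1/lam) * (β * x) ^ (α + 1 - 1)) := by
    ext x
    by_cases hx : 0 < x
    · rw [indicator_of_mem (show x ∈ Ioi 0 from hx), degGammaPdf, if_pos hx,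
        add_sub_cancel_right, Real.rpow_sub_one (by positivity)]
      field_simp
    · rw [indicator_of_notMem (show x ∉ Ioi 0 from hx), degGammaPdf, if_neg hx, mul_zero]
  rw [hind, integral_indicator measurableSet_Ioi,
    integral_comp_mul_left_Ioi
      (fun t => (degGamma lam α)⁻¹ * ((1 + lam * t) ^ (-1/lam) * t ^ (α + 1 - 1))) 0 hβ,
    mul_zero, integral_const_mul, smul_eq_mul]
  change β⁻¹ * ((degGamma lam α)⁻¹ * degGamma lam (α + 1)) = _
  field_simp

theorem degGamma_expectation (lam α β : ℝ) (hlam : lam ∈ Set.Ioo (0:ℝ) 1)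
    (hα : 0 < α) (hβ : 0 < β) (h : α + 2 < 1 / lam) :
    ∫ x : ℝ, x * degGammaPdf lam α β x = α / (β * (1 - lam * (α + 1))) := by
  have hden : 0 < 1 - lam * (α + 1) := by
    nlinarith [(lt_div_iff₀ hlam.1).mp h, hlam.1]
  have hΓ := degGamma_pos hlam.1 hα (by linarith)
  rw [integral_mul_degGammaPdf lam α hβ,
    div_eq_div_iff (mul_pos hβ hΓ).ne' (mul_pos hβ hden).ne']
  linear_combination β * degGamma_add_one hlam.1 hα (by linarith)
end

section
/- For λ ∈ (0,1), the degenerate exponential moment generating identity for X ~ Γ_λ(1,1): E[e_λ(Xt)] = ∑_{n=0}^∞ [(1-λ)/((1-nλ)(1-(n+1)λ))] t^n as a formal power series, where e_λ(xt) = ∑_{n=0}^∞ (1)_{n,λ} (xt)^n/n! ... i.e., the coefficient of t^n equals (1)_{n,λ} E[X^n]/n! = (1-λ)/((1-nλ)(1-(n+1)λ)). -/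
/-!
Write `J_n(s) = ∫₀^∞ xⁿ (1 + a x)^(-s) dx`. Differentiating `x^(n+1) (1 + a x)^(1-s)` and
integrating over `(0, ∞)` (the boundary terms vanish for `s > n + 2`) gives the recursion
`a (s - n - 2) J_{n+1} = (n + 1) J_n`, with `J_0 = 1 / (a (s - 1))`; hence
`J_n = n! / (aⁿ⁺¹ (s-1)(s-2)⋯(s-n-1))`. For `a = λ`, `s = 1/λ` the denominator is
`(1)_{n+2,λ} = (1)_{n,λ} (1 - nλ)(1 - (n+1)λ)`, and `(1)_{n,λ}` and `n!` cancel.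
-/

open MeasureTheory Finset

/-- The degenerate falling factorial `(1)_{n,λ} = ∏_{j<n} (1 - jλ)`. -/
noncomputable def degFall (x lam : ℝ) (n : ℕ) : ℝ :=
  ∏ j ∈ Finset.range n, (x - j * lam)

/-- The probability density function of the degenerate gamma distribution `Γ_λ(1,1)`. -/
noncomputable def degGammaPdf11 (lam x : ℝ) : ℝ :=
  if 0 < x then (1 - lam) * (1 + lam * x) ^ (-1/lam) else 0

open Set Filter Topology
open scoped Nat

section DegFall

variable {x lam : ℝ} {n : ℕ}

lemma degFall_succ (x lam : ℝ) (n : ℕ) :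
    degFall x lam (n + 1) = degFall x lam n * (x - n * lam) :=
  prod_range_succ _ n

lemma degFall_succ' (x lam : ℝ) (n : ℕ) :
    degFall x lam (n + 1) = degFall (x - lam) lam n * x := by
  simp only [degFall, prod_range_succ', Nat.cast_add, Nat.cast_zero, Nat.cast_one, zero_mul,
    sub_zero]
  exact congrArg (· * x) (prod_congr rfl fun j _ => by ring)

lemma degFall_mul_mul (c x lam : ℝ) (n : ℕ) :
    degFall (c * x) (c * lam) n = c ^ n * degFall x lam n := by
  calc ∏ j ∈ range n, (c * x - j * (c * lam)) = ∏ j ∈ range n, c * (x - j * lam) :=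
        prod_congr rfl fun j _ => by ring
    _ = c ^ n * degFall x lam n := by rw [prod_mul_distrib, prod_const, card_range, degFall]

lemma degFall_pos (hlam : 0 ≤ lam) (h : n * lam < x) : 0 < degFall x lam n :=
  prod_pos fun j hj => by
    have : (j : ℝ) ≤ n := by exact_mod_cast (mem_range.mp hj).le
    nlinarith

end DegFall

section PowMulOneAddMulRpow

variable {a : ℝ}

lemma pow_mul_one_add_mul_rpow_le (ha : 0 < a) (m : ℕ) {p x : ℝ} (hp : p ≤ 0) (hx : 0 < x) :
    x ^ m * (1 + a * x) ^ p ≤ a ^ p * x ^ ((m : ℝ) + p) := by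
  have hax : 0 < a * x := mul_pos ha hx
  calc x ^ m * (1 + a * x) ^ p ≤ x ^ m * (a * x) ^ p := by
        have : (1 + a * x) ^ p ≤ (a * x) ^ p :=
          Real.rpow_le_rpow_of_nonpos hax (by linarith) hp
        exact mul_le_mul_of_nonneg_left this (by positivity)
    _ = a ^ p * x ^ ((m : ℝ) + p) := by
        rw [Real.mul_rpow ha.le hx.le, Real.rpow_add hx, Real.rpow_natCast]
        ring

lemma continuousOn_pow_mul_one_add_mul_rpow (ha : 0 ≤ a) (m : ℕ) (p : ℝ) :
    ContinuousOn (fun x : ℝ => x ^ m * (1 + a * x) ^ p) (Ici 0) := by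
  refine (continuousOn_pow m).mul (ContinuousOn.rpow_const (by fun_prop) fun x hx => Or.inl ?_)
  have : 0 ≤ x := hx
  positivity

lemma tendsto_pow_mul_one_add_mul_rpow_atTop (ha : 0 < a) (m : ℕ) {p : ℝ}
    (hmp : (m : ℝ) + p < 0) :
    Tendsto (fun x : ℝ => x ^ m * (1 + a * x) ^ p) atTop (𝓝 0) := by
  have hp : p ≤ 0 := by linarith [m.cast_nonneg (α := ℝ)]
  have hbound : Tendsto (fun x : ℝ => a ^ p * x ^ ((m : ℝ) + p)) atTop (𝓝 0) := by
    simpa using (tendsto_rpow_neg_atTop (neg_pos.mpr hmp)).const_mul (a ^ p)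
  refine squeeze_zero' ?_ ?_ hbound
  · filter_upwards [eventually_gt_atTop 0] with x hx
    positivity
  · filter_upwards [eventually_gt_atTop 0] with x hx
    exact pow_mul_one_add_mul_rpow_le ha m hp hx

lemma integrableOn_pow_mul_one_add_mul_rpow (ha : 0 < a) (m : ℕ) {p : ℝ}
    (hmp : (m : ℝ) + p < -1) :
    IntegrableOn (fun x : ℝ => x ^ m * (1 + a * x) ^ p) (Ioi 0) := by
  have hp : p ≤ 0 := by linarith [m.cast_nonneg (α := ℝ)]
  have hnear : IntegrableOn (fun x : ℝ => x ^ m * (1 + a * x) ^ p) (Ioc 0 1) :=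
    ((continuousOn_pow_mul_one_add_mul_rpow ha.le m p).mono Icc_subset_Ici_self
      |>.integrableOn_Icc).mono_set Ioc_subset_Icc_self
  have hfar : IntegrableOn (fun x : ℝ => x ^ m * (1 + a * x) ^ p) (Ioi 1) := by
    refine ((integrableOn_Ioi_rpow_of_lt hmp one_pos).const_mul (a ^ p)).mono'
      (by fun_prop : Measurable _).aestronglyMeasurable ?_
    refine (ae_restrict_iff' measurableSet_Ioi).mpr (ae_of_all _ fun x (hx : 1 < x) => ?_)
    have hx0 : 0 < x := one_pos.trans hx
    rw [Real.norm_of_nonneg (by positivity)]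
    exact pow_mul_one_add_mul_rpow_le ha m hp hx0
  simpa [Ioc_union_Ioi_eq_Ioi zero_le_one] using hnear.union hfar

lemma hasDerivAt_one_add_mul_rpow {s x : ℝ} (hx : 0 < 1 + a * x) :
    HasDerivAt (fun x : ℝ => (1 + a * x) ^ (1 - s)) (-(a * (s - 1)) * (1 + a * x) ^ (-s)) x := by
  have h := (((hasDerivAt_id x).const_mul a).const_add 1).rpow_const (p := 1 - s)
    (Or.inl hx.ne')
  refine h.congr_deriv ?_
  rw [id_eq, sub_sub_cancel_left]
  ring

lemma hasDerivAt_pow_succ_mul_one_add_mul_rpow (n : ℕ) {s x : ℝ} (hx : 0 < 1 + a * x) :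
    HasDerivAt (fun x : ℝ => x ^ (n + 1) * (1 + a * x) ^ (1 - s))
      ((n + 1) * (x ^ n * (1 + a * x) ^ (-s))
        - a * (s - (n + 2)) * (x ^ (n + 1) * (1 + a * x) ^ (-s))) x := by
  refine ((hasDerivAt_pow (n + 1) x).mul
    (hasDerivAt_one_add_mul_rpow (s := s) hx)).congr_deriv ?_
  rw [show 1 - s = 1 + -s by ring, Real.rpow_add hx, Real.rpow_one]
  push_cast
  ring

lemma integral_one_add_mul_rpow_neg (ha : 0 < a) {s : ℝ} (hs : 1 < s) :
    ∫ x in Ioi 0, (1 + a * x) ^ (-s) = (a * (s - 1))⁻¹ := by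
  have hint : IntegrableOn (fun x : ℝ => (1 + a * x) ^ (-s)) (Ioi 0) := by
    simpa using integrableOn_pow_mul_one_add_mul_rpow ha 0 (p := -s) (by simpa using hs)
  have hlim : Tendsto (fun x : ℝ => (1 + a * x) ^ (1 - s)) atTop (𝓝 0) := by
    simpa using tendsto_pow_mul_one_add_mul_rpow_atTop ha 0 (p := 1 - s) (by simpa using hs)
  have hftc := integral_Ioi_of_hasDerivAt_of_tendsto'
    (fun x (hx : 0 ≤ x) => hasDerivAt_one_add_mul_rpow (s := s) (by positivity))
    (hint.const_mul _) hlim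
  rw [integral_const_mul] at hftc
  refine eq_inv_of_mul_eq_one_right ?_
  simpa using hftc

lemma integral_pow_succ_mul_one_add_mul_rpow_neg (ha : 0 < a) (n : ℕ) {s : ℝ}
    (hs : (n : ℝ) + 2 < s) :
    a * (s - (n + 2)) * ∫ x in Ioi 0, x ^ (n + 1) * (1 + a * x) ^ (-s)
      = (n + 1) * ∫ x in Ioi 0, x ^ n * (1 + a * x) ^ (-s) := by
  have hint : IntegrableOn (fun x : ℝ => x ^ n * (1 + a * x) ^ (-s)) (Ioi 0) :=
    integrableOn_pow_mul_one_add_mul_rpow ha n (by linarith)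
  have hint' : IntegrableOn (fun x : ℝ => x ^ (n + 1) * (1 + a * x) ^ (-s)) (Ioi 0) :=
    integrableOn_pow_mul_one_add_mul_rpow ha (n + 1) (by push_cast; linarith)
  have hlim := tendsto_pow_mul_one_add_mul_rpow_atTop ha (n + 1) (p := 1 - s)
    (by push_cast; linarith)
  have hftc := integral_Ioi_of_hasDerivAt_of_tendsto'
    (fun x (hx : 0 ≤ x) => hasDerivAt_pow_succ_mul_one_add_mul_rpow n (s := s) (by positivity))
    ((hint.const_mul _).sub (hint'.const_mul _)) hlim
  rw [integral_sub (hint.const_mul _) (hint'.const_mul _), integral_const_mul,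
    integral_const_mul] at hftc
  rw [zero_pow n.succ_ne_zero, zero_mul, sub_self] at hftc
  linarith

theorem integral_pow_mul_one_add_mul_rpow_neg (ha : 0 < a) (n : ℕ) {s : ℝ}
    (hs : (n : ℝ) + 1 < s) :
    ∫ x in Ioi 0, x ^ n * (1 + a * x) ^ (-s)
      = n ! / (a ^ (n + 1) * degFall (s - 1) 1 (n + 1)) := by
  induction n with
  | zero =>
    simpa [degFall] using integral_one_add_mul_rpow_neg ha (by simpa using hs)
  | succ n ih =>
    have hs : (n : ℝ) + 2 < s := by push_cast at hs; linarith
    have hne : a * (s - (n + 2)) ≠ 0 := mul_ne_zero ha.ne' (by linarith)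
    have hD : degFall (s - 1) 1 (n + 1) ≠ 0 :=
      (degFall_pos zero_le_one (by push_cast; linarith)).ne'
    have hrec := (mul_comm _ _).trans (integral_pow_succ_mul_one_add_mul_rpow_neg ha n hs)
    rw [(eq_div_iff hne).mpr hrec, ih (by linarith), degFall_succ (s - 1) 1 (n + 1),
      Nat.factorial_succ]
    push_cast
    field_simp
    ring

end PowMulOneAddMulRpow

lemma integral_pow_mul_degGammaPdf11 {lam : ℝ} (hlam : 0 < lam) {n : ℕ}
    (h : ((n : ℝ) + 1) * lam < 1) :
    ∫ x : ℝ, x ^ n * degGammaPdf11 lam x = (1 - lam) * n ! / degFall 1 lam (n + 2) := by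
  have hs : (n : ℝ) + 1 < 1 / lam := by rw [lt_div_iff₀ hlam]; linarith
  have hpdf : (fun x : ℝ => x ^ n * degGammaPdf11 lam x)
      = (Ioi (0 : ℝ)).indicator fun x => (1 - lam) * (x ^ n * (1 + lam * x) ^ (-(1 / lam))) := by
    ext x
    simp only [degGammaPdf11, Set.indicator_apply, Set.mem_Ioi, neg_div]
    split_ifs <;> ring
  have hfall : degFall 1 lam (n + 2) = lam ^ (n + 1) * degFall (1 / lam - 1) 1 (n + 1) := by
    rw [degFall_succ', mul_one, ← degFall_mul_mul, mul_one, mul_sub, mul_one_div_cancel hlam.ne',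
      mul_one]
  rw [hpdf, integral_indicator measurableSet_Ioi, integral_const_mul,
    integral_pow_mul_one_add_mul_rpow_neg hlam n hs, hfall, mul_div_assoc]

/-- The coefficient of `tⁿ` in `E[e_λ(Xt)] = ∑ₙ (1)_{n,λ} E[Xⁿ] tⁿ/n!` for `X ∼ Γ_λ(1,1)`
equals `(1-λ)/((1-nλ)(1-(n+1)λ))`. -/
theorem degExp_mgf_coeff (lam : ℝ) (hlam : lam ∈ Set.Ioo (0:ℝ) 1)
    (n : ℕ) (h : ((n : ℝ) + 1) * lam < 1) :
    degFall 1 lam n * (∫ x : ℝ, x ^ n * degGammaPdf11 lam x) / n.factorial =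
      (1 - lam) / ((1 - n * lam) * (1 - (n + 1) * lam)) := by
  obtain ⟨hlam0, -⟩ := hlam
  have hfall : degFall 1 lam n ≠ 0 := (degFall_pos hlam0.le (by nlinarith)).ne'
  have hn : 1 - n * lam ≠ 0 := by nlinarith
  have hn' : 1 - (n + 1) * lam ≠ 0 := by linarith
  rw [integral_pow_mul_degGammaPdf11 hlam0 h, degFall_succ, degFall_succ]
  push_cast
  field_simp
end
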